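/- Let h : ℕ → ℕ be monotone with h(x) ≥ x. Then the length hierarchy (h_α) is monotone in both arguments: (i) x < y implies h_α(x) ≤ h_α(y); (ii) α' ⊏_x α implies h_{α'}(x) ≤ h_α(x). -/

import Mathlib

/-- Ordinal terms below ε₀: a term is a list of exponents,
`cons β γ` denoting ω^β + γ. -/
inductive OT : Type
  | nil : OT
  | cons : OT → OT → OT
deriving DecidableEq

namespace OT

/-- The term 1 = ω^0. -/
def one : OT := cons nil nil

/-- Syntactic concatenation (direct sum) of ordinal terms. -/
def add : OT → OT → OT
  | nil, b => b
  | cons e r, b => cons e (add r b)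

/-- A term ω^{β₁}+...+ω^{β_m} is a successor iff m > 0 and β_m = 0. -/
def isSucc : OT → Bool
  | nil => false
  | cons e nil => e == nil
  | cons _ (cons e r) => isSucc (cons e r)

/-- Remove the last summand ω^0 of a successor term. -/
def pred : OT → OT
  | nil => nil
  | cons _ nil => nil
  | cons e (cons e' r) => cons e (pred (cons e' r))

/-- Limit terms. -/
def isLim (a : OT) : Prop := a ≠ nil ∧ isSucc a = false

/-- ω^β · n as an ordinal term. -/
def rep : ℕ → OT → OT
  | 0, _ => nil
  | n + 1, β => cons β (rep n β)

/-- The standard assignment of fundamental sequences (with ω_x = x+1):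
(γ+ω^{β+1})_x = γ+ω^β·(x+1) and (γ+ω^λ)_x = γ+ω^{λ_x}. -/
def fseq : OT → ℕ → OT
  | nil, _ => nil
  | cons β nil, x =>
      if β = nil then nil
      else if isSucc β then rep (x + 1) (pred β)
      else cons (fseq β x) nil
  | cons β (cons e r), x => cons β (fseq (cons e r) x)

/-- Syntactic ordering of terms (on CNF terms this is the ordinal ordering). -/
def lt : OT → OT → Prop
  | _, nil => False
  | nil, cons _ _ => True
  | cons a r, cons b s => lt a b ∨ (a = b ∧ lt r s)

def le (a b : OT) : Prop := lt a b ∨ a = b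

/-- Cantor normal form: exponents weakly decreasing, all in CNF. -/
def isCNF : OT → Prop
  | nil => True
  | cons b nil => isCNF b
  | cons b (cons e r) => isCNF b ∧ le e b ∧ isCNF (cons e r)

/-- Number of occurrences of the exponent β in a term. -/
def count (β : OT) : OT → ℕ
  | nil => 0
  | cons b r => (if b = β then 1 else 0) + count β r

/-- k-lean: every coefficient (at every level) is ≤ k. -/
def leanOrd (k : ℕ) : OT → Prop
  | nil => True
  | cons b r => count b (cons b r) ≤ k ∧ leanOrd k b ∧ leanOrd k r

end OT

/-- Pointwise-at-x ordering: smallest transitive relation with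
α ⊏_x α+1 and λ_x ⊏_x λ. -/
inductive Ptw (x : ℕ) : OT → OT → Prop
  | succ (a : OT) : Ptw x a (OT.add a OT.one)
  | lim (l : OT) : OT.isLim l → Ptw x (OT.fseq l x) l
  | trans {a b c : OT} : Ptw x a b → Ptw x b c → Ptw x a c


/-!
Read a term as an ordinal, `cons β γ ↦ ω ^ β + γ`. Predecessors, fundamental sequences and `⊏_x`
all decrease this value, so everything is proved by well-founded induction on it.

The key combinatorial fact is the Bachmann property: `x < y` implies `λ_x ⊏_x λ_y`. Given it,
monotonicity in the argument follows by induction on `α`: for a limit `λ`,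
`h_{λ_x}(x) ≤ h_{λ_y}(x) ≤ h_{λ_y}(y)`, the first step walking along the `⊏_x`-chain from `λ_x`
to `λ_y`. A step `α ⊏_x α + 1` cannot decrease the length since `h_α(x) ≤ h_α(h(x))`, by
monotonicity of `h_α` and `x ≤ h(x)`; so monotonicity in the argument below `α` already gives
monotonicity along `⊏_x` below `α`.
-/

namespace OT

open scoped Ordinal

noncomputable def toOrdinal : OT → Ordinal.{0}
  | nil => 0
  | cons b r => ω ^ toOrdinal b + toOrdinal r

theorem toOrdinal_nil : toOrdinal nil = 0 := rfl

theorem toOrdinal_cons (b r : OT) : toOrdinal (cons b r) = ω ^ toOrdinal b + toOrdinal r := rfl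

theorem wellFounded_toOrdinal_lt : WellFounded fun a b : OT => toOrdinal a < toOrdinal b :=
  InvImage.wf _ wellFounded_lt

theorem cons_ne_nil (b r : OT) : cons b r ≠ nil := nofun

theorem add_nil : ∀ a, add a nil = a
  | nil => rfl
  | cons e r => by rw [add, add_nil r]

protected theorem add_assoc : ∀ a b c, add (add a b) c = add a (add b c)
  | nil, _, _ => rfl
  | cons e r, b, c => by simp only [add, OT.add_assoc r]

theorem add_ne_nil {a c : OT} (hc : c ≠ nil) : add a c ≠ nil := by
  cases a <;> simp [add, hc]

theorem isSucc_cons {c : OT} (hc : c ≠ nil) (b : OT) : isSucc (cons b c) = isSucc c := by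
  cases c
  · exact absurd rfl hc
  · rfl

theorem pred_cons {c : OT} (hc : c ≠ nil) (b : OT) : pred (cons b c) = cons b (pred c) := by
  cases c
  · exact absurd rfl hc
  · rfl

theorem fseq_cons {c : OT} (hc : c ≠ nil) (b : OT) (x : ℕ) :
    fseq (cons b c) x = cons b (fseq c x) := by
  cases c
  · exact absurd rfl hc
  · rfl

theorem isSucc_add {c : OT} (hc : c ≠ nil) : ∀ a, isSucc (add a c) = isSucc c
  | nil => rfl
  | cons b s => by rw [add, isSucc_cons (add_ne_nil hc), isSucc_add hc s]

theorem pred_add {c : OT} (hc : c ≠ nil) : ∀ a, pred (add a c) = add a (pred c)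
  | nil => rfl
  | cons b s => by rw [add, pred_cons (add_ne_nil hc), pred_add hc s, add]

theorem fseq_add {c : OT} (hc : c ≠ nil) (x : ℕ) : ∀ a, fseq (add a c) x = add a (fseq c x)
  | nil => rfl
  | cons b s => by rw [add, fseq_cons (add_ne_nil hc), fseq_add hc x s, add]

theorem isLim_add {c : OT} (hc : isLim c) (a : OT) : isLim (add a c) :=
  ⟨add_ne_nil hc.1, by rw [isSucc_add hc.1]; exact hc.2⟩

theorem isLim_cons_nil_iff {β : OT} : isLim (cons β nil) ↔ β ≠ nil := by
  simp [isLim, isSucc, cons_ne_nil]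

theorem isLim_cons_iff {c : OT} (hc : c ≠ nil) (b : OT) : isLim (cons b c) ↔ isLim c := by
  rw [isLim, isLim, isSucc_cons hc]
  exact and_congr_left fun _ => iff_of_true (cons_ne_nil _ _) hc

theorem isSucc_add_one (a : OT) : isSucc (add a one) = true :=
  isSucc_add (c := one) (cons_ne_nil _ _) a

theorem pred_add_one (a : OT) : pred (add a one) = a := by
  rw [pred_add (c := one) (cons_ne_nil _ _), one, pred, add_nil]

theorem ne_nil_of_isSucc {β : OT} (hs : isSucc β = true) : β ≠ nil := by
  rintro rfl; exact absurd hs (by simp [isSucc])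

theorem fseq_cons_nil_of_isSucc {β : OT} (hs : isSucc β = true) (x : ℕ) :
    fseq (cons β nil) x = rep (x + 1) (pred β) := by
  simp [fseq, ne_nil_of_isSucc hs, hs]

theorem fseq_cons_nil_of_isLim {β : OT} (hβ : isLim β) (x : ℕ) :
    fseq (cons β nil) x = cons (fseq β x) nil := by
  simp [fseq, hβ.1, hβ.2]

theorem isSucc_or_isLim_of_ne_nil {a : OT} (ha : a ≠ nil) : isSucc a = true ∨ isLim a := by
  cases hs : isSucc a
  · exact .inr ⟨ha, hs⟩
  · exact .inl rfl

theorem add_rep (β : OT) : ∀ j k, add (rep j β) (rep k β) = rep (j + k) β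
  | 0, k => by rw [Nat.zero_add]; rfl
  | j + 1, k => by rw [Nat.add_right_comm, rep, rep, add, add_rep β j k]

theorem add_rep_one (β : OT) (k : ℕ) : add (rep k β) (cons β nil) = rep (k + 1) β :=
  add_rep β k 1

theorem toOrdinal_add : ∀ a b, toOrdinal (add a b) = toOrdinal a + toOrdinal b
  | nil, b => by simp [toOrdinal, add]
  | cons e r, b => by simp [toOrdinal, add, toOrdinal_add r, _root_.add_assoc]

theorem toOrdinal_one : toOrdinal one = 1 := by simp [one, toOrdinal]

theorem toOrdinal_rep (β : OT) : ∀ k, toOrdinal (rep k β) = ω ^ toOrdinal β * k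
  | 0 => by simp [rep, toOrdinal]
  | k + 1 => by
      have hcast : ((k + 1 : ℕ) : Ordinal) = 1 + k := by norm_cast; omega
      rw [rep, toOrdinal_cons, toOrdinal_rep β k, hcast, mul_add, mul_one]

theorem toOrdinal_pred : ∀ a, isSucc a = true → toOrdinal a = toOrdinal (pred a) + 1
  | nil, h => absurd h (by simp [isSucc])
  | cons e nil, h => by
      obtain rfl : e = nil := by simpa [isSucc] using h
      simp [toOrdinal, pred]
  | cons e (cons e' r), h => by
      rw [isSucc_cons (cons_ne_nil _ _)] at h
      rw [pred_cons (cons_ne_nil _ _), toOrdinal_cons e, toOrdinal_cons e, toOrdinal_pred _ h,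
        _root_.add_assoc]

theorem toOrdinal_pred_lt {a : OT} (hs : isSucc a = true) : toOrdinal (pred a) < toOrdinal a := by
  rw [toOrdinal_pred a hs]; exact Order.lt_add_one_iff.2 le_rfl

theorem toOrdinal_fseq_lt : ∀ a, isLim a → ∀ x, toOrdinal (fseq a x) < toOrdinal a
  | nil, h, _ => absurd rfl h.1
  | cons β nil, h, x => by
      rcases isSucc_or_isLim_of_ne_nil (isLim_cons_nil_iff.1 h) with hs | hl
      · rw [fseq_cons_nil_of_isSucc hs, toOrdinal_rep, toOrdinal_cons, toOrdinal_nil, add_zero,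
          toOrdinal_pred β hs, Ordinal.opow_add, Ordinal.opow_one]
        exact (mul_lt_mul_iff_right₀ (Ordinal.opow_pos _ Ordinal.omega0_pos)).2
          (Ordinal.natCast_lt_omega0 _)
      · rw [fseq_cons_nil_of_isLim hl, toOrdinal_cons, toOrdinal_cons, toOrdinal_nil, add_zero,
          add_zero]
        exact (Ordinal.opow_lt_opow_iff_right Ordinal.one_lt_omega0).2 (toOrdinal_fseq_lt β hl x)
  | cons β (cons e r), h, x => by
      rw [isLim_cons_iff (cons_ne_nil _ _)] at h
      rw [fseq_cons (cons_ne_nil _ _), toOrdinal_cons, toOrdinal_cons]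
      exact add_lt_add_right (toOrdinal_fseq_lt _ h x) _

end OT

open OT

namespace Ptw

variable {x : ℕ}

theorem toOrdinal_lt {c d : OT} (hp : Ptw x c d) : toOrdinal c < toOrdinal d := by
  induction hp with
  | succ a => rw [toOrdinal_add, toOrdinal_one]; exact Order.lt_add_one_iff.2 le_rfl
  | lim l hl => exact toOrdinal_fseq_lt l hl x
  | trans _ _ ih₁ ih₂ => exact ih₁.trans ih₂

theorem lim_add {γ c : OT} (hc : isLim c) : Ptw x (add γ (fseq c x)) (add γ c) := by
  rw [← fseq_add hc.1]; exact lim _ (isLim_add hc γ)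

theorem add_left {r r' : OT} (hp : Ptw x r r') (γ : OT) : Ptw x (add γ r) (add γ r') := by
  induction hp generalizing γ with
  | succ a => rw [← OT.add_assoc]; exact succ _
  | lim l hl => exact lim_add hl
  | trans _ _ ih₁ ih₂ => exact (ih₁ γ).trans (ih₂ γ)

theorem self_add_rep_of {β : OT} (hβ : ∀ c, Ptw x c (add c (cons β nil))) :
    ∀ k c, Ptw x c (add c (rep (k + 1) β))
  | 0, c => hβ c
  | k + 1, c => by
      have step := hβ (add c (rep (k + 1) β))
      rw [OT.add_assoc, add_rep_one] at step
      exact (self_add_rep_of hβ k c).trans step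

theorem self_add_omega_pow (x : ℕ) (β : OT) : ∀ γ, Ptw x γ (add γ (cons β nil)) := by
  induction β using wellFounded_toOrdinal_lt.induction with
  | _ β ih =>
    intro γ
    rcases eq_or_ne β nil with rfl | hβ
    · exact succ γ
    have hlim := isLim_cons_nil_iff.2 hβ
    rcases isSucc_or_isLim_of_ne_nil hβ with hs | hl
    · have hchain := self_add_rep_of (ih _ (toOrdinal_pred_lt hs)) x γ
      rw [← fseq_cons_nil_of_isSucc hs] at hchain
      exact hchain.trans (lim_add hlim)
    · have hstep := ih _ (toOrdinal_fseq_lt β hl x) γ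
      rw [← fseq_cons_nil_of_isLim hl] at hstep
      exact hstep.trans (lim_add hlim)

theorem self_add_rep (x : ℕ) (β : OT) (k : ℕ) (c : OT) : Ptw x c (add c (rep (k + 1) β)) :=
  self_add_rep_of (self_add_omega_pow x β) k c

theorem add_omega_pow {b b' : OT} (hp : Ptw x b b') (γ : OT) :
    Ptw x (add γ (cons b nil)) (add γ (cons b' nil)) := by
  induction hp generalizing γ with
  | succ b =>
      have hlim := isLim_cons_nil_iff.2 (ne_nil_of_isSucc (isSucc_add_one b))
      have hfseq := fseq_cons_nil_of_isSucc (isSucc_add_one b) x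
      rw [pred_add_one] at hfseq
      have hlast := lim_add (γ := γ) (x := x) hlim
      rw [hfseq] at hlast
      cases x with
      | zero => exact hlast
      | succ m =>
          -- `γ + ω^b·(m+2) = (γ + ω^b) + ω^b·(m+1)`
          have hchain := self_add_rep (m + 1) b m (add γ (cons b nil))
          rw [OT.add_assoc, show cons b nil = rep 1 b from rfl, add_rep, Nat.add_comm 1] at hchain
          exact hchain.trans hlast
  | lim l hl =>
      have hlast := lim_add (γ := γ) (x := x) (isLim_cons_nil_iff.2 hl.1)
      rwa [fseq_cons_nil_of_isLim hl] at hlast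
  | trans _ _ ih₁ ih₂ => exact (ih₁ γ).trans (ih₂ γ)

theorem fseq_of_lt : ∀ a, isLim a → ∀ {x y : ℕ}, x < y → Ptw x (fseq a x) (fseq a y)
  | nil, h, _, _, _ => absurd rfl h.1
  | cons β nil, h, x, y, hxy => by
      rcases isSucc_or_isLim_of_ne_nil (isLim_cons_nil_iff.1 h) with hs | hl
      · rw [fseq_cons_nil_of_isSucc hs, fseq_cons_nil_of_isSucc hs]
        obtain ⟨m, rfl⟩ : ∃ m, y = x + 1 + m := ⟨y - x - 1, by omega⟩
        have hchain := self_add_rep x (pred β) m (rep (x + 1) (pred β))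
        rwa [add_rep, ← Nat.add_assoc] at hchain
      · rw [fseq_cons_nil_of_isLim hl, fseq_cons_nil_of_isLim hl]
        exact add_omega_pow (fseq_of_lt β hl hxy) nil
  | cons β (cons e r), h, x, y, hxy => by
      rw [isLim_cons_iff (cons_ne_nil _ _)] at h
      rw [fseq_cons (cons_ne_nil _ _), fseq_cons (cons_ne_nil _ _)]
      exact add_left (fseq_of_lt _ h hxy) (cons β nil)

end Ptw

section LengthHierarchy

variable {h : ℕ → ℕ} {L : OT → ℕ → ℕ}

theorem length_le_of_ptw (hge : ∀ x, x ≤ h x)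
    (hLs : ∀ a x, isSucc a = true → L a x = 1 + L (pred a) (h x))
    (hLl : ∀ a x, isLim a → L a x = L (fseq a x) x) {x : ℕ} {c d : OT} (hcd : Ptw x c d)
    (hmono_below : ∀ e, toOrdinal e < toOrdinal d → Monotone (L e)) : L c x ≤ L d x := by
  induction hcd with
  | succ a =>
      rw [hLs _ x (isSucc_add_one a), pred_add_one]
      have := hmono_below a (Ptw.succ (x := x) a).toOrdinal_lt (hge x)
      omega
  | lim l hl => rw [hLl l x hl]
  | trans _ hbd ih₁ ih₂ =>
      exact (ih₁ fun e he => hmono_below e (he.trans hbd.toOrdinal_lt)).trans (ih₂ hmono_below)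

theorem monotone_length (hmono : Monotone h) (hge : ∀ x, x ≤ h x) (hL0 : ∀ x, L nil x = 0)
    (hLs : ∀ a x, isSucc a = true → L a x = 1 + L (pred a) (h x))
    (hLl : ∀ a x, isLim a → L a x = L (fseq a x) x) (a : OT) : Monotone (L a) := by
  induction a using wellFounded_toOrdinal_lt.induction with
  | _ a ih =>
    intro x y hxy
    rcases eq_or_ne a nil with rfl | hne
    · rw [hL0, hL0]
    rcases isSucc_or_isLim_of_ne_nil hne with hs | hl
    · rw [hLs a x hs, hLs a y hs]
      have := ih _ (toOrdinal_pred_lt hs) (hmono hxy)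
      omega
    rcases hxy.eq_or_lt with rfl | hlt
    · exact le_rfl
    rw [hLl a x hl, hLl a y hl]
    have hy := toOrdinal_fseq_lt a hl y
    calc L (fseq a x) x
        ≤ L (fseq a y) x :=
          length_le_of_ptw hge hLs hLl (Ptw.fseq_of_lt a hl hlt) fun e he => ih e (he.trans hy)
      _ ≤ L (fseq a y) y := ih _ hy hxy

end LengthHierarchy

/-- For monotone h with h(x) ≥ x, the length hierarchy is monotone:
(i) x < y implies h_α(x) ≤ h_α(y); (ii) α' ⊏_x α implies h_{α'}(x) ≤ h_α(x). -/
theorem stmt17 (h : ℕ → ℕ)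
    (hmono : ∀ a b : ℕ, a ≤ b → h a ≤ h b) (hge : ∀ x, x ≤ h x)
    (L : OT → ℕ → ℕ)
    (hL0 : ∀ x, L OT.nil x = 0)
    (hLs : ∀ a x, OT.isSucc a = true → L a x = 1 + L (OT.pred a) (h x))
    (hLl : ∀ a x, OT.isLim a → L a x = L (OT.fseq a x) x) :
    (∀ (a : OT) (x y : ℕ), x < y → L a x ≤ L a y) ∧
    (∀ (a' a : OT) (x : ℕ), Ptw x a' a → L a' x ≤ L a x) := by
  have hmonoL := monotone_length (fun _ _ => hmono _ _) hge hL0 hLs hLl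
  exact ⟨fun a _ _ hxy => hmonoL a hxy.le,
    fun _ _ _ hp => length_le_of_ptw hge hLs hLl hp fun e _ => hmonoL e⟩
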